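/- Bound on Hadamard powers of correlations with the data (Lemma A.4). Under the data assumption with n ≤ C₀ d for an absolute constant C₀: there exist constants c, C > 0 such that for all sufficiently large d, with probability at least 1 − 2 exp(−c √d) over the data x_1, …, x_n, the following holds simultaneously for every x̂ ∈ ℝ^d with ‖x̂‖_2 = √d and every integer l ≥ 2: ‖ (X x̂)^{∘l} / d^l ‖_2 ≤ C₁^{l−1} + C d^{−0.1}, where X ∈ ℝ^{n×d} is the matrix with rows x_1, …, x_n, C₁ := max_{i ∈ [n]} |x_iᵀ x̂| / d, and (X x̂)^{∘l} ∈ ℝⁿ denotes the entrywise l-th power of the vector X x̂. -/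

import Mathlib

/-!
Write `aᵢ = |⟪xᵢ, x̂⟫| / d ≤ C₁` and split the indices at the threshold `aᵢ² > C₁ ε`, where
`ε = d^{-1/8}`. The small entries contribute at most `(C₁ ε)^{l-1} ∑ aᵢ²`, and `∑ aᵢ² ≤ B` as
soon as the data matrix has operator norm `O(d)`. The large entries are at most `B / (C₁ ε)` in
number, and since distinct data points are nearly orthogonal, `|⟪xᵢ, xⱼ⟫| ≤ κ d^{3/4}`, Schur's
test bounds their `ℓ²`-mass by `1 + O(ε / C₁)`. Altogether `∑ aᵢ^{2l} ≤ C₁^{2l-2} + O(C₁^{l-1} ε)`,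
and `ε ≤ d^{-0.1}`.

Both properties of the data hold with probability `1 - 2e^{-√d}`. The operator norm is controlled
on a `1/2`-net of the sphere of size `5^d`, and for each net point `v` by a Chernoff bound for
`∑ᵢ ⟪v, xᵢ⟫²` built on the sub-Gaussian bound `E exp(⟪v, x⟫² / t²) ≤ 2`. Near-orthogonality
follows by conditioning on `xᵢ`, with a union bound over the `n² ≤ C₀² d²` pairs.
-/

open MeasureTheory ProbabilityTheory Filter

noncomputable section

/-- Euclidean (ℓ²) norm of a vector in `Fin m → ℝ`. -/
def eNorm {m : ℕ} (x : Fin m → ℝ) : ℝ := Real.sqrt (∑ j, (x j) ^ 2)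

/-- Euclidean dot product. -/
def dotp {m : ℕ} (u v : Fin m → ℝ) : ℝ := ∑ j, u j * v j

/-- The random-features map `x ↦ (φ(vₖᵀx))ₖ`, where `vₖ` is the `k`-th row of `V`. -/
def featureMap {p d : ℕ} (φ : ℝ → ℝ) (V : Fin p → Fin d → ℝ) (x : Fin d → ℝ) :
    Fin p → ℝ := fun k => φ (dotp (V k) x)

/-- The `l`-th normalized probabilists' Hermite polynomial (orthonormal in `L²(N(0,1))`). -/
def hermiteFn (l : ℕ) (x : ℝ) : ℝ :=
  (Polynomial.aeval x (Polynomial.hermite l)) / Real.sqrt (Nat.factorial l)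

/-- The `l`-th Hermite coefficient `μ_l` of `φ`. -/
def hermiteCoeff (φ : ℝ → ℝ) (l : ℕ) : ℝ :=
  ∫ g, φ g * hermiteFn l g ∂(gaussianReal 0 1)

/-- The nonlinear part of the feature map: `φ̃(x) = (φ(vₖᵀx) − μ₁ vₖᵀx)ₖ`. -/
def tfeatureMap {p d : ℕ} (φ : ℝ → ℝ) (V : Fin p → Fin d → ℝ) (x : Fin d → ℝ) :
    Fin p → ℝ := fun k => φ (dotp (V k) x) - hermiteCoeff φ 1 * dotp (V k) x

/-- `μ̃² := Σ_{l ≥ 3} μ_l²`. -/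
def tmu2 (φ : ℝ → ℝ) : ℝ := ∑' l : ℕ, if 3 ≤ l then (hermiteCoeff φ l) ^ 2 else 0

/-- The law of the random features matrix: i.i.d. entries `N(0, 1/d)`. -/
def gaussianMatrix (p d : ℕ) : Measure (Fin p → Fin d → ℝ) :=
  Measure.pi fun _ => Measure.pi fun _ => gaussianReal 0 ((d : NNReal))⁻¹

/-- Sub-Gaussian norm of a distribution on `ℝ^d`:
`sup_{‖u‖₂ = 1} inf { t > 0 : E exp((uᵀx)²/t²) ≤ 2 }`. -/
def vecSubGNorm {d : ℕ} (P : Measure (Fin d → ℝ)) : ℝ :=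
  ⨆ u : {u : Fin d → ℝ // eNorm u = 1},
    sInf {t : ℝ | 0 < t ∧ ∫ x, Real.exp ((dotp u.1 x) ^ 2 / t ^ 2) ∂P ≤ 2}

/-- Data assumption: `P` is a probability distribution on `ℝ^d` with `‖x‖₂ = √d` a.s.
and sub-Gaussian norm at most `K`. -/
structure DataAssumption {d : ℕ} (P : Measure (Fin d → ℝ)) (K : ℝ) : Prop where
  prob : IsProbabilityMeasure P
  norm_eq : ∀ᵐ x ∂P, eNorm x = Real.sqrt d
  subg : vecSubGNorm P ≤ K

/-- Core activation assumption: `φ` is non-linear, Lipschitz, with Lipschitz derivative,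
`μ₀ = μ₂ = 0` and `μ₁ ≠ 0`. -/
structure ActivationAssumptionCore (φ : ℝ → ℝ) : Prop where
  nonlinear : ¬ ∃ a b : ℝ, ∀ z, φ z = a * z + b
  lipschitz : ∃ L : NNReal, LipschitzWith L φ
  differentiable : Differentiable ℝ φ
  deriv_lipschitz : ∃ L' : NNReal, LipschitzWith L' (deriv φ)
  mu0 : hermiteCoeff φ 0 = 0
  mu2 : hermiteCoeff φ 2 = 0
  mu1 : hermiteCoeff φ 1 ≠ 0

/-- Full activation assumption: additionally, there are two non-zero Hermite coefficients
of order ≥ 3 with different parity. -/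
structure ActivationAssumption (φ : ℝ → ℝ) extends ActivationAssumptionCore φ : Prop where
  parity : ∃ l l' : ℕ, 3 ≤ l ∧ 3 ≤ l' ∧ l % 2 ≠ l' % 2 ∧
    hermiteCoeff φ l ≠ 0 ∧ hermiteCoeff φ l' ≠ 0

open scoped RealInnerProductSpace ENNReal NNReal
open Finset Metric Real

lemma eNorm_eq_norm {m : ℕ} (x : Fin m → ℝ) : eNorm x = ‖WithLp.toLp 2 x‖ := by
  simp [eNorm, EuclideanSpace.norm_eq]

lemma dotp_eq_inner {m : ℕ} (u v : Fin m → ℝ) :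
    dotp u v = ⟪WithLp.toLp 2 u, WithLp.toLp 2 v⟫ := by
  simp [dotp, PiLp.inner_apply, mul_comm]

@[fun_prop]
lemma continuous_dotp {m : ℕ} (u : Fin m → ℝ) : Continuous (dotp u) := by
  unfold dotp; fun_prop

section Gram

variable {F : Type*} [NormedAddCommGroup F] [InnerProductSpace ℝ F] {ι : Type*}

/-- Schur's test for the Gram matrix of the family `y` restricted to `T`. -/
lemma norm_sum_smul_sq_le_of_row_sum_le (T : Finset ι) (y : ι → F) (c : ι → ℝ) {R : ℝ}
    (hR : ∀ i ∈ T, ∑ j ∈ T, |⟪y i, y j⟫| ≤ R) :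
    ‖∑ i ∈ T, c i • y i‖ ^ 2 ≤ R * ∑ i ∈ T, c i ^ 2 := by
  have hamgm : ∀ i j, c i * c j * ⟪y i, y j⟫ ≤ (c i ^ 2 / 2 + c j ^ 2 / 2) * |⟪y i, y j⟫| := by
    intro i j
    rcases abs_cases ⟪y i, y j⟫ with ⟨h, _⟩ | ⟨h, _⟩ <;> rw [h] <;>
      nlinarith [sq_nonneg (c i - c j), sq_nonneg (c i + c j)]
  calc ‖∑ i ∈ T, c i • y i‖ ^ 2 = ∑ i ∈ T, ∑ j ∈ T, c i * c j * ⟪y i, y j⟫ := by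
        simp only [← real_inner_self_eq_norm_sq, sum_inner, inner_sum, real_inner_smul_left,
          real_inner_smul_right]
        exact sum_congr rfl fun i _ => sum_congr rfl fun j _ => by rw [real_inner_comm]; ring
    _ ≤ ∑ i ∈ T, ∑ j ∈ T, (c i ^ 2 / 2 + c j ^ 2 / 2) * |⟪y i, y j⟫| :=
        sum_le_sum fun i _ => sum_le_sum fun j _ => hamgm i j
    _ = ∑ i ∈ T, c i ^ 2 * ∑ j ∈ T, |⟪y i, y j⟫| := by
        simp only [add_mul, sum_add_distrib]
        rw [sum_comm (f := fun i j => c j ^ 2 / 2 * |⟪y i, y j⟫|), ← sum_add_distrib]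
        refine sum_congr rfl fun i _ => ?_
        rw [mul_sum, ← sum_add_distrib]
        exact sum_congr rfl fun j _ => by rw [real_inner_comm]; ring
    _ ≤ ∑ i ∈ T, c i ^ 2 * R := by gcongr with i hi; exact hR i hi
    _ = R * ∑ i ∈ T, c i ^ 2 := by rw [← sum_mul, mul_comm]

lemma sum_inner_sq_le_of_row_sum_le (T : Finset ι) (y : ι → F) (Y : F) {R : ℝ} (hR0 : 0 ≤ R)
    (hR : ∀ i ∈ T, ∑ j ∈ T, |⟪y i, y j⟫| ≤ R) :
    ∑ i ∈ T, ⟪y i, Y⟫ ^ 2 ≤ R * ‖Y‖ ^ 2 := by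
  set S := ∑ i ∈ T, ⟪y i, Y⟫ ^ 2
  set v := ∑ i ∈ T, ⟪y i, Y⟫ • y i
  have hS : S ≤ ‖v‖ * ‖Y‖ := by
    have : S = ⟪v, Y⟫ := by simp only [v, S, sum_inner, real_inner_smul_left, sq]
    exact this ▸ real_inner_le_norm v Y
  have hv := norm_sum_smul_sq_le_of_row_sum_le T y (fun i => ⟪y i, Y⟫) hR
  have hS0 : 0 ≤ S := sum_nonneg fun i _ => sq_nonneg _
  -- `S ^ 2 ≤ ‖v‖ ^ 2 ‖Y‖ ^ 2 ≤ R S ‖Y‖ ^ 2`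
  nlinarith [mul_le_mul hS hS hS0 (by positivity), mul_nonneg hR0 (sq_nonneg ‖Y‖),
    sq_nonneg (S - R * ‖Y‖ ^ 2)]

lemma sum_inner_sq_le_of_abs_inner_le (T : Finset ι) (y : ι → F) (Y : F) {D ρ : ℝ}
    (hD0 : 0 ≤ D) (hD : ∀ i ∈ T, ‖y i‖ ^ 2 ≤ D) (hρ0 : 0 ≤ ρ)
    (hρ : ∀ i ∈ T, ∀ j ∈ T, i ≠ j → |⟪y i, y j⟫| ≤ ρ) :
    ∑ i ∈ T, ⟪y i, Y⟫ ^ 2 ≤ (D + #T * ρ) * ‖Y‖ ^ 2 := by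
  classical
  refine sum_inner_sq_le_of_row_sum_le T y Y (by positivity) fun i hi => ?_
  rw [← add_sum_erase T _ hi, real_inner_self_eq_norm_sq, abs_of_nonneg (sq_nonneg _)]
  gcongr
  · exact hD i hi
  calc ∑ j ∈ T.erase i, |⟪y i, y j⟫| ≤ ∑ _j ∈ T.erase i, ρ :=
        sum_le_sum fun j hj => hρ i hi j (mem_of_mem_erase hj) (ne_of_mem_erase hj).symm
    _ ≤ #T * ρ := by
        rw [sum_const, nsmul_eq_mul]
        gcongr
        exact erase_subset i T

end Gram

section Hadamard

/-- Entries with `a i ^ 2 ≤ M ε` contribute at most `(M ε) ^ (l - 1) B`; the others are at most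
`B / (M ε)` in number, so `hT` bounds their `ℓ²`-mass by `1 + B κ ε / M`. -/
lemma sum_pow_two_mul_le {ι : Type*} [Fintype ι] (a : ι → ℝ) {M ε B κ : ℝ} {l : ℕ} (hl : 2 ≤ l)
    (ha : ∀ i, 0 ≤ a i) (haM : ∀ i, a i ≤ M) (hM0 : 0 ≤ M) (hM1 : M ≤ 1)
    (hε0 : 0 ≤ ε) (hε1 : ε ≤ 1) (hκ : 0 ≤ κ) (hB : ∑ i, a i ^ 2 ≤ B)
    (hT : ∀ T : Finset ι, ∑ i ∈ T, a i ^ 2 ≤ 1 + #T * (κ * ε ^ 2)) :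
    ∑ i, a i ^ (2 * l) ≤ (M ^ (l - 1) + B * (κ + 1) * ε) ^ 2 := by
  classical
  set T := univ.filter fun i => M * ε < a i ^ 2
  have hsq_le : ∀ s : Finset ι, ∑ i ∈ s, a i ^ 2 ≤ B := fun s =>
    (sum_le_sum_of_subset_of_nonneg (subset_univ s) fun i _ _ => sq_nonneg _).trans hB
  have hB0 : 0 ≤ B := (sum_nonneg fun i _ => sq_nonneg (a i)).trans hB
  have hcard : #T * (M * ε) ≤ B := by
    have := (sum_le_sum fun i hi => (mem_filter.mp hi).2.le).trans (hsq_le T)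
    rwa [sum_const, nsmul_eq_mul] at this
  have hsplit : ∀ i, a i ^ (2 * l) = (a i ^ 2) ^ (l - 1) * a i ^ 2 := fun i => by
    rw [← pow_mul, ← pow_add]; congr 1; omega
  have hlarge : ∑ i ∈ T, a i ^ (2 * l) ≤ (M ^ 2) ^ (l - 1) * (1 + #T * (κ * ε ^ 2)) := by
    refine le_trans ?_ (mul_le_mul_of_nonneg_left (hT T) (by positivity))
    rw [mul_sum]
    refine sum_le_sum fun i _ => ?_
    rw [hsplit]
    gcongr
    exacts [ha i, haM i]
  have hsmall : ∑ i ∈ univ.filter (fun i => ¬ M * ε < a i ^ 2), a i ^ (2 * l)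
      ≤ (M * ε) ^ (l - 1) * B := by
    refine le_trans ?_ (mul_le_mul_of_nonneg_left
      (hsq_le (univ.filter fun i => ¬ M * ε < a i ^ 2)) (by positivity))
    rw [mul_sum]
    refine sum_le_sum fun i hi => ?_
    rw [hsplit]
    gcongr
    exact not_lt.mp (mem_filter.mp hi).2
  set A := M ^ (l - 1)
  have hM2 : (M ^ 2) ^ (l - 1) = A * A := by rw [← mul_pow, sq]
  have hfew : A * (#T * ε) ≤ B := by
    rw [show A = M ^ (l - 2) * M by rw [← pow_succ, show l - 2 + 1 = l - 1 by omega],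
      mul_assoc, ← mul_assoc M, mul_comm M, mul_assoc]
    exact (mul_le_of_le_one_left (by positivity) (pow_le_one₀ hM0 hM1)).trans hcard
  have hεl : ε ^ (l - 1) ≤ ε := pow_le_of_le_one hε0 hε1 (by omega)
  calc ∑ i, a i ^ (2 * l)
      = ∑ i ∈ T, a i ^ (2 * l) + ∑ i ∈ univ.filter (fun i => ¬ M * ε < a i ^ 2), a i ^ (2 * l) :=
        (sum_filter_add_sum_filter_not _ _ _).symm
    _ ≤ (M ^ 2) ^ (l - 1) * (1 + #T * (κ * ε ^ 2)) + (M * ε) ^ (l - 1) * B :=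
        add_le_add hlarge hsmall
    _ = A * A + A * (A * (#T * ε) * (κ * ε)) + A * (ε ^ (l - 1) * B) := by
        rw [hM2, show (M * ε) ^ (l - 1) = A * ε ^ (l - 1) from mul_pow M ε _]; ring
    _ ≤ A * A + A * (B * (κ * ε)) + A * (ε * B) := by gcongr
    _ ≤ (A + B * (κ + 1) * ε) ^ 2 := by
        have hh : 0 ≤ B * (κ + 1) * ε := by positivity
        nlinarith [mul_nonneg (pow_nonneg hM0 (l - 1) : 0 ≤ A) hh]

variable {F : Type*} [NormedAddCommGroup F] [InnerProductSpace ℝ F] {ι : Type*} [Fintype ι]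

theorem sqrt_sum_inner_pow_div_pow_sq_le (y : ι → F) (Y : F) {d B κ ε : ℝ} (hd : 0 < d)
    (hε0 : 0 ≤ ε) (hε1 : ε ≤ 1) (hκ : 0 ≤ κ) (hy : ∀ i, ‖y i‖ = √d) (hY : ‖Y‖ = √d)
    (hpair : ∀ i j, i ≠ j → |⟪y i, y j⟫| ≤ κ * ε ^ 2 * d)
    (hop : ∑ i, ⟪y i, Y⟫ ^ 2 ≤ B * d ^ 2) {l : ℕ} (hl : 2 ≤ l) :
    √(∑ i, (⟪y i, Y⟫ ^ l / d ^ l) ^ 2) ≤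
      (⨆ i, |⟪y i, Y⟫| / d) ^ (l - 1) + B * (κ + 1) * ε := by
  set a : ι → ℝ := fun i => |⟪y i, Y⟫| / d
  have ha0 : ∀ i, 0 ≤ a i := fun i => by positivity
  have ha1 : ∀ i, a i ≤ 1 := fun i => by
    rw [div_le_one hd]
    calc |⟪y i, Y⟫| ≤ ‖y i‖ * ‖Y‖ := abs_real_inner_le_norm _ _
      _ = d := by rw [hy i, hY, Real.mul_self_sqrt hd.le]
  have hsum_sq : ∀ T : Finset ι, ∑ i ∈ T, a i ^ 2 = (∑ i ∈ T, ⟪y i, Y⟫ ^ 2) / d ^ 2 := fun T => by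
    simp only [a, div_pow, sq_abs, sum_div]
  have hB : ∑ i, a i ^ 2 ≤ B := by
    rw [hsum_sq, div_le_iff₀ (by positivity)]; exact hop
  have hT : ∀ T : Finset ι, ∑ i ∈ T, a i ^ 2 ≤ 1 + #T * (κ * ε ^ 2) := fun T => by
    have hgram := sum_inner_sq_le_of_abs_inner_le T y Y hd.le
      (fun i _ => by rw [hy i, Real.sq_sqrt hd.le]) (by positivity)
      (fun i _ j _ hij => hpair i j hij)
    rw [hsum_sq, div_le_iff₀ (by positivity)]
    calc ∑ i ∈ T, ⟪y i, Y⟫ ^ 2 ≤ (d + #T * (κ * ε ^ 2 * d)) * ‖Y‖ ^ 2 := hgram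
      _ = (1 + #T * (κ * ε ^ 2)) * d ^ 2 := by rw [hY, Real.sq_sqrt hd.le]; ring
  have hM := sum_pow_two_mul_le a hl ha0 (le_ciSup (Set.finite_range a).bddAbove)
    (Real.iSup_nonneg ha0) (Real.iSup_le ha1 zero_le_one) hε0 hε1 hκ hB hT
  have hlhs : ∀ i, (⟪y i, Y⟫ ^ l / d ^ l) ^ 2 = a i ^ (2 * l) := fun i => by
    rw [← div_pow, ← pow_mul, mul_comm l 2, pow_mul, pow_mul]
    simp only [a, div_pow, sq_abs]
  have hB0 : 0 ≤ B := (sum_nonneg fun i _ => sq_nonneg (a i)).trans hB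
  simp only [hlhs]
  exact Real.sqrt_le_iff.mpr
    ⟨add_nonneg (pow_nonneg (Real.iSup_nonneg ha0) _) (by positivity), hM⟩

end Hadamard

section Net

open MeasureTheory Module Set

variable {E : Type*} [NormedAddCommGroup E] [NormedSpace ℝ E] [FiniteDimensional ℝ E]

/-- The balls of radius `1/4` around the points of `S` are disjoint and lie in the ball of
radius `5/4`, so comparing Haar measures gives `#S (1/4)^k ≤ (5/4)^k`. -/
lemma card_le_five_pow_of_isSeparated {S : Finset E} (hS : (S : Set E) ⊆ closedBall 0 1)
    (hsep : IsSeparated ((2⁻¹ : ℝ≥0) : ℝ≥0∞) (S : Set E)) : #S ≤ 5 ^ finrank ℝ E := by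
  borelize E
  set μ : Measure E := Measure.addHaar
  set k := finrank ℝ E
  have hdisj : (S : Set E).PairwiseDisjoint fun v => ball v 4⁻¹ := fun u hu v hv huv => by
    refine ball_disjoint_ball ?_
    have : _ < edist u v := hsep hu hv huv
    rw [edist_nndist, ENNReal.coe_lt_coe, ← NNReal.coe_lt_coe, coe_nndist] at this
    push_cast at this
    linarith
  have hsub : (⋃ v ∈ S, ball v 4⁻¹) ⊆ ball (0 : E) (5 / 4) := by
    refine iUnion₂_subset fun v hv => ball_subset_ball' ?_
    have := mem_closedBall_zero_iff.mp (hS hv)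
    rw [dist_zero_right]; linarith
  have hball0 : μ (ball 0 1) ≠ 0 := (measure_ball_pos μ 0 one_pos).ne'
  have hball1 : μ (ball 0 1) ≠ ⊤ := measure_ball_lt_top.ne
  have hvol : (#S : ℝ≥0∞) * ENNReal.ofReal (4⁻¹ ^ k) ≤ ENNReal.ofReal ((5 / 4) ^ k) := by
    rw [← ENNReal.mul_le_mul_iff_left hball0 hball1]
    calc (#S : ℝ≥0∞) * ENNReal.ofReal (4⁻¹ ^ k) * μ (ball 0 1)
        = ∑ v ∈ S, μ (ball v 4⁻¹) := by
          rw [sum_congr rfl fun v _ => Measure.addHaar_ball_of_pos μ v (by norm_num), sum_const,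
            nsmul_eq_mul, mul_assoc]
      _ = μ (⋃ v ∈ S, ball v 4⁻¹) :=
          (measure_biUnion_finset hdisj fun _ _ => measurableSet_ball).symm
      _ ≤ μ (ball 0 (5 / 4)) := measure_mono hsub
      _ = ENNReal.ofReal ((5 / 4) ^ k) * μ (ball 0 1) :=
          Measure.addHaar_ball_of_pos μ 0 (by norm_num)
  rw [← ENNReal.ofReal_natCast, ← ENNReal.ofReal_mul (by positivity),
    ENNReal.ofReal_le_ofReal_iff (by positivity)] at hvol
  have : (#S : ℝ) ≤ 5 ^ k := by
    calc (#S : ℝ) = #S * 4⁻¹ ^ k * 4 ^ k := by rw [mul_assoc, ← mul_pow]; norm_num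
      _ ≤ (5 / 4) ^ k * 4 ^ k := by gcongr
      _ = 5 ^ k := by rw [← mul_pow]; norm_num
  exact_mod_cast this

lemma packingNumber_sphere_le :
    packingNumber (2⁻¹ : ℝ≥0) (sphere (0 : E) 1) ≤ 5 ^ finrank ℝ E := by
  refine iSup₂_le fun C hC => iSup_le fun hsep => ?_
  by_contra! hlt
  obtain ⟨t, htC, ht⟩ := exists_subset_encard_eq (Order.add_one_le_of_lt hlt)
  have htfin : t.Finite := finite_of_encard_eq_coe (k := 5 ^ finrank ℝ E + 1) (by simpa using ht)
  have hcard := card_le_five_pow_of_isSeparated (S := htfin.toFinset)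
    (by simpa using (htC.trans hC).trans sphere_subset_closedBall) (by simpa using hsep.subset htC)
  rw [htfin.encard_eq_coe_toFinset_card] at ht
  have : #htfin.toFinset = 5 ^ finrank ℝ E + 1 := by exact_mod_cast ht
  omega

lemma exists_finset_isCover_sphere :
    ∃ N : Finset E, IsCover (2⁻¹ : ℝ≥0) (sphere 0 1) (N : Set E) ∧
      (N : Set E) ⊆ sphere 0 1 ∧ #N ≤ 5 ^ finrank ℝ E := by
  have hne : packingNumber (2⁻¹ : ℝ≥0) (sphere (0 : E) 1) ≠ ⊤ :=
    ne_top_of_le_ne_top (by simp) packingNumber_sphere_le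
  have hcard := encard_maximalSeparatedSet hne ▸ packingNumber_sphere_le (E := E)
  have hfin := finite_of_encard_le_coe (by exact_mod_cast hcard)
  refine ⟨hfin.toFinset, by simpa using isCover_maximalSeparatedSet hne,
    by simpa using maximalSeparatedSet_subset, ?_⟩
  rw [hfin.encard_eq_coe_toFinset_card] at hcard
  exact_mod_cast hcard

end Net

lemma ContinuousLinearMap.opNorm_le_two_mul_of_isCover {X Y : Type*} [NormedAddCommGroup X]
    [NormedSpace ℝ X] [SeminormedAddCommGroup Y] [NormedSpace ℝ Y] (L : X →L[ℝ] Y) {N : Set X}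
    (hN : IsCover (2⁻¹ : ℝ≥0) (sphere 0 1) N) {b : ℝ} (hb0 : 0 ≤ b)
    (hb : ∀ v ∈ N, ‖L v‖ ≤ b) : ‖L‖ ≤ 2 * b := by
  suffices ‖L‖ ≤ ‖L‖ / 2 + b by linarith
  refine L.opNorm_le_of_unit_norm (by positivity) fun w hw => ?_
  obtain ⟨v, hv, hwv⟩ := hN (mem_sphere_zero_iff_norm.mpr hw)
  have hwv : ‖w - v‖ ≤ 2⁻¹ := by
    rw [← dist_eq_norm, ← coe_nndist]
    exact_mod_cast edist_le_coe.mp hwv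
  calc ‖L w‖ = ‖L (w - v) + L v‖ := by rw [← map_add, sub_add_cancel]
    _ ≤ ‖L‖ * ‖w - v‖ + b := (norm_add_le _ _).trans (add_le_add (L.le_opNorm _) (hb v hv))
    _ ≤ ‖L‖ / 2 + b := by nlinarith [norm_nonneg L]

lemma sum_inner_sq_le_of_isCover {F : Type*} [NormedAddCommGroup F] [InnerProductSpace ℝ F]
    {ι : Type*} [Fintype ι] (y : ι → F) {N : Set F} (hN : IsCover (2⁻¹ : ℝ≥0) (sphere 0 1) N)
    {b : ℝ} (hb0 : 0 ≤ b) (hb : ∀ v ∈ N, ∑ i, ⟪y i, v⟫ ^ 2 ≤ b) (w : F) :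
    ∑ i, ⟪y i, w⟫ ^ 2 ≤ 4 * b * ‖w‖ ^ 2 := by
  let L : F →L[ℝ] EuclideanSpace ℝ ι := (EuclideanSpace.equiv ι ℝ).symm.toContinuousLinearMap ∘L
    ContinuousLinearMap.pi fun i => innerSL ℝ (y i)
  have hL : ∀ w, ‖L w‖ ^ 2 = ∑ i, ⟪y i, w⟫ ^ 2 := fun w => by
    simp [L, EuclideanSpace.norm_sq_eq]
  have hLnorm : ‖L‖ ≤ 2 * √b := L.opNorm_le_two_mul_of_isCover hN (Real.sqrt_nonneg b)
    fun v hv => by simpa using Real.abs_le_sqrt ((hL v).le.trans (hb v hv))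
  rw [← hL]
  calc ‖L w‖ ^ 2 ≤ (2 * √b * ‖w‖) ^ 2 := by
        gcongr
        exact (L.le_opNorm w).trans (mul_le_mul_of_nonneg_right hLnorm (norm_nonneg w))
    _ = 4 * b * ‖w‖ ^ 2 := by rw [mul_pow, mul_pow, Real.sq_sqrt hb0]; ring

lemma measure_ge_le_exp_neg_mul_integral_exp {Ω : Type*} [MeasurableSpace Ω] {μ : Measure Ω}
    [IsFiniteMeasure μ] {X : Ω → ℝ} (hX : Integrable (fun ω => exp (X ω)) μ) (θ : ℝ) :
    μ {ω | θ ≤ X ω} ≤ ENNReal.ofReal (exp (-θ) * ∫ ω, exp (X ω) ∂μ) := by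
  have h := measure_ge_le_exp_mul_mgf θ zero_le_one (by simpa only [one_mul] using hX)
  simp only [mgf, one_mul, neg_mul] at h
  rwa [ENNReal.le_ofReal_iff_toReal_le (measure_ne_top _ _)
    (mul_nonneg (exp_nonneg _) (integral_nonneg fun _ => exp_nonneg _))]

lemma measure_pi_sum_ge_le {Ω : Type*} [MeasurableSpace Ω] {P : Measure Ω}
    [IsProbabilityMeasure P] {ι : Type*} [Fintype ι] {f : Ω → ℝ}
    (hf : Integrable (fun ω => exp (f ω)) P) (θ : ℝ) :
    (Measure.pi fun _ : ι => P) {x | θ ≤ ∑ i, f (x i)} ≤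
      ENNReal.ofReal (exp (-θ) * (∫ ω, exp (f ω) ∂P) ^ Fintype.card ι) := by
  have hexp : ∀ x : ι → Ω, exp (∑ i, f (x i)) = ∏ i, exp (f (x i)) := fun x => exp_sum _ _
  have := measure_ge_le_exp_neg_mul_integral_exp (μ := Measure.pi fun _ : ι => P)
    (X := fun x => ∑ i, f (x i)) (by simpa only [hexp] using Integrable.fintype_prod fun _ => hf) θ
  simp only [hexp] at this
  rwa [integral_fintype_prod_eq_pow (fun ω => exp (f ω))] at this

lemma map_pi_prodMk_eval_eq_prod {X : Type*} [MeasurableSpace X] (P : Measure X)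
    [IsProbabilityMeasure P] {ι : Type*} [Fintype ι] {i j : ι} (hij : i ≠ j) :
    (Measure.pi fun _ : ι => P).map (fun x => (x i, x j)) = P.prod P := by
  have h := (iIndepFun_pi (X := fun _ : ι => id) (μ := fun _ => P)
    fun _ => aemeasurable_id).indepFun hij
  have h2 := h.map_prod_eq_prod_map_map (measurable_pi_apply i).aemeasurable
    (measurable_pi_apply j).aemeasurable
  rw [h2, (measurePreserving_eval _ i).map_eq, (measurePreserving_eval _ j).map_eq]

namespace DataAssumption

variable {d : ℕ} {P : Measure (Fin d → ℝ)} {K : ℝ} {u : Fin d → ℝ}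

lemma ae_dotp_sq_le (hP : DataAssumption P K) (hu : eNorm u = 1) :
    ∀ᵐ y ∂P, dotp u y ^ 2 ≤ d := by
  filter_upwards [hP.norm_eq] with y hy
  have := abs_real_inner_le_norm (WithLp.toLp 2 u) (WithLp.toLp 2 y)
  rw [← dotp_eq_inner, ← eNorm_eq_norm, ← eNorm_eq_norm, hu, hy, one_mul] at this
  simpa [sq_abs, Real.sq_sqrt] using pow_le_pow_left₀ (abs_nonneg _) this 2

lemma integrable_exp_dotp_sq_div (hP : DataAssumption P K) (hu : eNorm u = 1) (s : ℝ) :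
    Integrable (fun y => exp (dotp u y ^ 2 / s ^ 2)) P := by
  have := hP.prob
  refine .of_bound (by fun_prop) (exp (d / s ^ 2)) ?_
  filter_upwards [hP.ae_dotp_sq_le hu] with y hy
  rw [Real.norm_of_nonneg (exp_nonneg _), exp_le_exp]
  exact div_le_div_of_nonneg_right hy (sq_nonneg s)

lemma integral_exp_dotp_sq_div_le_two_of_le (hP : DataAssumption P K) (hu : eNorm u = 1)
    {s : ℝ} (hs : 2 * d ≤ s ^ 2) : ∫ y, exp (dotp u y ^ 2 / s ^ 2) ∂P ≤ 2 := by
  have := hP.prob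
  have hexp : exp (1 / 2) ≤ 2 := by
    nlinarith [exp_one_lt_d9, exp_pos (1 / 2), exp_add (1 / 2) (1 / 2)]
  calc ∫ y, exp (dotp u y ^ 2 / s ^ 2) ∂P ≤ ∫ _y, 2 ∂P := by
        refine integral_mono_ae (hP.integrable_exp_dotp_sq_div hu s) (integrable_const 2) ?_
        filter_upwards [hP.ae_dotp_sq_le hu] with y hy
        refine le_trans (exp_le_exp.mpr ?_) hexp
        exact div_le_of_le_mul₀ (sq_nonneg s) (by norm_num) (by linarith)
    _ = 2 := by simp

lemma integral_exp_dotp_sq_div_le_two (hP : DataAssumption P K) (hu : eNorm u = 1) {t : ℝ}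
    (hKt : K < t) : ∫ y, exp (dotp u y ^ 2 / t ^ 2) ∂P ≤ 2 := by
  have hmem : ∀ v : Fin d → ℝ, eNorm v = 1 →
      √(2 * d + 1) ∈ {s | 0 < s ∧ ∫ y, exp (dotp v y ^ 2 / s ^ 2) ∂P ≤ 2} := fun v hv =>
    ⟨by positivity, hP.integral_exp_dotp_sq_div_le_two_of_le hv
      (by rw [Real.sq_sqrt (by positivity)]; linarith)⟩
  have hbdd : BddAbove (Set.range fun v : {v : Fin d → ℝ // eNorm v = 1} =>
      sInf {s | 0 < s ∧ ∫ y, exp (dotp v.1 y ^ 2 / s ^ 2) ∂P ≤ 2}) := by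
    refine bddAbove_def.mpr ⟨√(2 * d + 1), ?_⟩
    rintro _ ⟨v, rfl⟩
    exact csInf_le ⟨0, fun s hs => hs.1.le⟩ (hmem v v.2)
  have hSle := (le_ciSup hbdd ⟨u, hu⟩).trans hP.subg
  obtain ⟨s, ⟨hs0, hs2⟩, hst⟩ := exists_lt_of_csInf_lt ⟨_, hmem u hu⟩ (hSle.trans_lt hKt)
  refine le_trans (integral_mono (hP.integrable_exp_dotp_sq_div hu t)
    (hP.integrable_exp_dotp_sq_div hu s) fun y => ?_) hs2
  exact exp_le_exp.mpr (div_le_div_of_nonneg_left (sq_nonneg _) (by positivity)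
    (pow_le_pow_left₀ hs0.le hst.le 2))

lemma measure_abs_dotp_ge_le (hP : DataAssumption P K) (hu : eNorm u = 1) {t : ℝ} (hKt : K < t)
    {r : ℝ} (hr : 0 ≤ r) :
    P {y | r ≤ |dotp u y|} ≤ ENNReal.ofReal (2 * exp (-(r ^ 2 / t ^ 2))) := by
  have := hP.prob
  calc P {y | r ≤ |dotp u y|} ≤ P {y | r ^ 2 / t ^ 2 ≤ dotp u y ^ 2 / t ^ 2} :=
        measure_mono fun y hy => div_le_div_of_nonneg_right
          (by simpa only [sq_abs] using pow_le_pow_left₀ hr hy 2) (sq_nonneg t)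
    _ ≤ ENNReal.ofReal (exp (-(r ^ 2 / t ^ 2)) * ∫ y, exp (dotp u y ^ 2 / t ^ 2) ∂P) :=
        measure_ge_le_exp_neg_mul_integral_exp (hP.integrable_exp_dotp_sq_div hu t) _
    _ ≤ ENNReal.ofReal (2 * exp (-(r ^ 2 / t ^ 2))) := by
        rw [mul_comm]
        gcongr
        exact hP.integral_exp_dotp_sq_div_le_two hu hKt

lemma measure_pi_sum_dotp_sq_ge_le (hP : DataAssumption P K) (hu : eNorm u = 1) {t : ℝ}
    (hKt : K < t) (n : ℕ) (θ : ℝ) :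
    (Measure.pi fun _ : Fin n => P) {x | θ ≤ ∑ i, dotp u (x i) ^ 2} ≤
      ENNReal.ofReal (2 ^ n * exp (-(θ / t ^ 2))) := by
  have := hP.prob
  calc (Measure.pi fun _ : Fin n => P) {x | θ ≤ ∑ i, dotp u (x i) ^ 2}
      ≤ (Measure.pi fun _ : Fin n => P) {x | θ / t ^ 2 ≤ ∑ i, dotp u (x i) ^ 2 / t ^ 2} :=
        measure_mono fun x hx => by
          simpa only [Set.mem_ofPred_eq, ← sum_div] using
            div_le_div_of_nonneg_right hx (sq_nonneg t)
    _ ≤ ENNReal.ofReal (exp (-(θ / t ^ 2)) * (∫ y, exp (dotp u y ^ 2 / t ^ 2) ∂P) ^ n) := by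
        simpa only [Fintype.card_fin] using
          measure_pi_sum_ge_le (ι := Fin n) (hP.integrable_exp_dotp_sq_div hu t) (θ / t ^ 2)
    _ ≤ ENNReal.ofReal (2 ^ n * exp (-(θ / t ^ 2))) := by
        rw [mul_comm]
        gcongr
        exact hP.integral_exp_dotp_sq_div_le_two hu hKt

/-- Condition on `x i`: for a.e. value `a` of it, `a / √d` is a unit vector, independent of
`x j`. -/
lemma measure_pi_abs_dotp_ge_le (hP : DataAssumption P K) (hd : 0 < d) {t : ℝ} (hKt : K < t)
    {n : ℕ} {i j : Fin n} (hij : i ≠ j) {r : ℝ} (hr : 0 ≤ r) :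
    (Measure.pi fun _ : Fin n => P) {x | r * √d ≤ |dotp (x i) (x j)|} ≤
      ENNReal.ofReal (2 * exp (-(r ^ 2 / t ^ 2))) := by
  have := hP.prob
  set A := {p : (Fin d → ℝ) × (Fin d → ℝ) | r * √d ≤ |dotp p.1 p.2|}
  have hA : MeasurableSet A := measurableSet_le measurable_const (by unfold dotp; fun_prop)
  have hsd : 0 < √(d : ℝ) := Real.sqrt_pos.mpr (by exact_mod_cast hd)
  calc (Measure.pi fun _ : Fin n => P) {x | r * √d ≤ |dotp (x i) (x j)|} = (P.prod P) A := by
        rw [← map_pi_prodMk_eval_eq_prod P hij, Measure.map_apply (by fun_prop) hA]; rfl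
    _ = ∫⁻ a, P (Prod.mk a ⁻¹' A) ∂P := Measure.prod_apply hA
    _ ≤ ∫⁻ _, ENNReal.ofReal (2 * exp (-(r ^ 2 / t ^ 2))) ∂P := lintegral_mono_ae ?_
    _ = ENNReal.ofReal (2 * exp (-(r ^ 2 / t ^ 2))) := by simp
  filter_upwards [hP.norm_eq] with a ha
  have hu : eNorm ((√d)⁻¹ • a) = 1 := by
    rw [eNorm_eq_norm, WithLp.toLp_smul, norm_smul, ← eNorm_eq_norm, ha, norm_inv,
      Real.norm_of_nonneg hsd.le, inv_mul_cancel₀ hsd.ne']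
  convert hP.measure_abs_dotp_ge_le hu hKt hr using 2
  ext b
  simp only [A, Set.mem_preimage, Set.mem_ofPred_eq, dotp, Pi.smul_apply, smul_eq_mul, mul_assoc,
    ← mul_sum, abs_mul, abs_inv, abs_of_pos hsd, le_inv_mul_iff₀ hsd, mul_comm r]

end DataAssumption

section GoodSample

structure IsGoodSample {d n : ℕ} (N : Finset (EuclideanSpace ℝ (Fin d))) (θ ρ : ℝ)
    (x : Fin n → Fin d → ℝ) : Prop where
  eNorm_eq : ∀ i, eNorm (x i) = √d
  sum_dotp_sq_le : ∀ v ∈ N, ∑ i, dotp (WithLp.ofLp v) (x i) ^ 2 ≤ θ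
  abs_dotp_le : ∀ i j, i ≠ j → |dotp (x i) (x j)| ≤ ρ

variable {d n : ℕ} {N : Finset (EuclideanSpace ℝ (Fin d))}

theorem IsGoodSample.eNorm_pow_div_pow_le (hd : 0 < d)
    (hN : IsCover (2⁻¹ : ℝ≥0) (sphere 0 1) (N : Set (EuclideanSpace ℝ (Fin d))))
    {B κ ε : ℝ} (hB : 0 ≤ B) (hκ : 0 ≤ κ) (hε0 : 0 ≤ ε) (hε1 : ε ≤ 1)
    {x : Fin n → Fin d → ℝ} (hx : IsGoodSample N (B * d) (κ * ε ^ 2 * d) x)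
    {xh : Fin d → ℝ} (hxh : eNorm xh = √d) {l : ℕ} (hl : 2 ≤ l) :
    eNorm (fun i => dotp (x i) xh ^ l / (d : ℝ) ^ l) ≤
      (⨆ i, |dotp (x i) xh| / (d : ℝ)) ^ (l - 1) + 4 * B * (κ + 1) * ε := by
  set y : Fin n → EuclideanSpace ℝ (Fin d) := fun i => WithLp.toLp 2 (x i)
  have hnet : ∀ v ∈ (N : Set _), ∑ i, ⟪y i, v⟫ ^ 2 ≤ B * d := fun v hv => by
    simpa only [dotp_eq_inner, WithLp.toLp_ofLp, real_inner_comm] using hx.sum_dotp_sq_le v hv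
  have hop := sum_inner_sq_le_of_isCover y hN (by positivity) hnet (WithLp.toLp 2 xh)
  rw [← eNorm_eq_norm, hxh, Real.sq_sqrt (Nat.cast_nonneg d)] at hop
  simp only [eNorm, dotp_eq_inner]
  exact sqrt_sum_inner_pow_div_pow_sq_le y _ (by exact_mod_cast hd) hε0 hε1 hκ
    (fun i => (eNorm_eq_norm _).symm.trans (hx.eNorm_eq i)) ((eNorm_eq_norm _).symm.trans hxh)
    (fun i j hij => by simpa only [dotp_eq_inner] using hx.abs_dotp_le i j hij)
    (hop.trans_eq (by ring)) hl

namespace DataAssumption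

variable {P : Measure (Fin d → ℝ)} {K t : ℝ}

lemma measure_pi_exists_sum_dotp_sq_gt_le (hP : DataAssumption P K) (hKt : K < t)
    (hN : (N : Set (EuclideanSpace ℝ (Fin d))) ⊆ sphere 0 1) (θ : ℝ) :
    (Measure.pi fun _ : Fin n => P) {x | ¬ ∀ v ∈ N, ∑ i, dotp (WithLp.ofLp v) (x i) ^ 2 ≤ θ} ≤
      ENNReal.ofReal (#N * (2 ^ n * exp (-(θ / t ^ 2)))) := by
  calc _ ≤ (Measure.pi fun _ : Fin n => P)
        (⋃ v ∈ N, {x | θ ≤ ∑ i, dotp (WithLp.ofLp v) (x i) ^ 2}) := measure_mono fun x hx => by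
        push Not at hx
        obtain ⟨v, hv, hθ⟩ := hx
        exact Set.mem_biUnion hv hθ.le
    _ ≤ ∑ v ∈ N, (Measure.pi fun _ : Fin n => P)
        {x | θ ≤ ∑ i, dotp (WithLp.ofLp v) (x i) ^ 2} := measure_biUnion_finset_le _ _
    _ ≤ #N • ENNReal.ofReal (2 ^ n * exp (-(θ / t ^ 2))) := sum_le_card_nsmul _ _ _ fun v hv =>
        hP.measure_pi_sum_dotp_sq_ge_le (by simpa [eNorm_eq_norm] using hN hv) hKt n θ
    _ = _ := by rw [nsmul_eq_mul, ← ENNReal.ofReal_natCast, ← ENNReal.ofReal_mul (by positivity)]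

lemma measure_pi_exists_abs_dotp_gt_le (hP : DataAssumption P K) (hd : 0 < d) (hKt : K < t)
    {r : ℝ} (hr : 0 ≤ r) :
    (Measure.pi fun _ : Fin n => P) {x | ¬ ∀ i j, i ≠ j → |dotp (x i) (x j)| ≤ r * √d} ≤
      ENNReal.ofReal (n ^ 2 * (2 * exp (-(r ^ 2 / t ^ 2)))) := by
  calc _ ≤ (Measure.pi fun _ : Fin n => P)
        (⋃ p ∈ (univ : Finset (Fin n)).offDiag, {x | r * √d ≤ |dotp (x p.1) (x p.2)|}) :=
        measure_mono fun x hx => by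
          push Not at hx
          obtain ⟨i, j, hij, hρ⟩ := hx
          exact Set.mem_biUnion (x := (i, j)) (by simpa using hij) hρ.le
    _ ≤ ∑ p ∈ (univ : Finset (Fin n)).offDiag, (Measure.pi fun _ : Fin n => P)
        {x | r * √d ≤ |dotp (x p.1) (x p.2)|} := measure_biUnion_finset_le _ _
    _ ≤ #(univ : Finset (Fin n)).offDiag • ENNReal.ofReal (2 * exp (-(r ^ 2 / t ^ 2))) :=
        sum_le_card_nsmul _ _ _ fun p hp =>
          hP.measure_pi_abs_dotp_ge_le hd hKt (by simpa using hp) hr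
    _ ≤ _ := by
        rw [nsmul_eq_mul, ← ENNReal.ofReal_natCast, ← ENNReal.ofReal_mul (by positivity)]
        gcongr
        rw [offDiag_card, card_univ, Fintype.card_fin]
        exact_mod_cast (Nat.sub_le _ _).trans (sq n).ge

lemma measure_pi_not_isGoodSample_le (hP : DataAssumption P K) (hd : 0 < d) (hKt : K < t)
    (hN : (N : Set (EuclideanSpace ℝ (Fin d))) ⊆ sphere 0 1) (θ : ℝ) {r : ℝ} (hr : 0 ≤ r) :
    (Measure.pi fun _ : Fin n => P) {x | ¬ IsGoodSample N θ (r * √d) x} ≤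
      ENNReal.ofReal (#N * (2 ^ n * exp (-(θ / t ^ 2)))) +
        ENNReal.ofReal (n ^ 2 * (2 * exp (-(r ^ 2 / t ^ 2)))) := by
  have := hP.prob
  have hnorm : (Measure.pi fun _ : Fin n => P) {x | ¬ ∀ i, eNorm (x i) = √d} = 0 :=
    ae_iff.mp (ae_all_iff.mpr fun i =>
      (Measure.tendsto_eval_ae_ae (i := i) (μ := fun _ => P)).eventually hP.norm_eq)
  calc _ ≤ (Measure.pi fun _ : Fin n => P) ({x | ¬ ∀ i, eNorm (x i) = √d} ∪
          ({x | ¬ ∀ v ∈ N, ∑ i, dotp (WithLp.ofLp v) (x i) ^ 2 ≤ θ} ∪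
            {x | ¬ ∀ i j, i ≠ j → |dotp (x i) (x j)| ≤ r * √d})) := measure_mono fun x hx => by
        by_contra h
        simp only [Set.mem_union, Set.mem_ofPred_eq, not_or, not_not] at h
        exact hx ⟨h.1, h.2.1, h.2.2⟩
    _ ≤ _ := by
        refine (measure_union_le _ _).trans ?_
        rw [hnorm, zero_add]
        exact (measure_union_le _ _).trans (add_le_add
          (hP.measure_pi_exists_sum_dotp_sq_gt_le hKt hN θ)
          (hP.measure_pi_exists_abs_dotp_gt_le hd hKt hr))

end DataAssumption

end GoodSample

lemma one_sub_le_measure_of_measure_compl_le {Ω : Type*} [MeasurableSpace Ω] {μ : Measure Ω}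
    [IsProbabilityMeasure μ] {s : Set Ω} {ε : ℝ≥0∞} (h : μ sᶜ ≤ ε) : 1 - ε ≤ μ s := by
  rw [tsub_le_iff_right, ← measure_univ (μ := μ), ← Set.union_compl_self s]
  exact (measure_union_le s sᶜ).trans (by gcongr)

lemma exists_eighth_root {x : ℝ} (hx : 1 ≤ x) :
    ∃ q : ℝ, 1 ≤ q ∧ q ^ 8 = x ∧ √x = q ^ 4 ∧ q⁻¹ ≤ x ^ (-(0.1 : ℝ)) := by
  have hq : (x ^ (8⁻¹ : ℝ)) ^ 8 = x := by
    rw [← rpow_natCast, ← rpow_mul (by linarith)]; norm_num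
  refine ⟨x ^ (8⁻¹ : ℝ), one_le_rpow hx (by norm_num), hq, ?_, ?_⟩
  · conv_lhs => rw [← hq]
    rw [show 8 = 4 * 2 by rfl, pow_mul, sqrt_sq (by positivity)]
  · rw [← rpow_neg (by linarith)]; exact rpow_le_rpow_of_exponent_le hx (by norm_num)

lemma mul_two_pow_mul_exp_le {m d n : ℕ} {A : ℝ} (hm : m ≤ 5 ^ d) (hn : (n : ℝ) ≤ A * d) :
    m * (2 ^ n * exp (-((A + 3) * d))) ≤ exp (-√d) := by
  have h5 : (m : ℝ) ≤ exp (2 * d) := by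
    rw [mul_comm, exp_nat_mul]
    refine (Nat.cast_le.mpr hm).trans ?_
    push_cast
    exact pow_le_pow_left₀ (by norm_num) (by nlinarith [quadratic_le_exp_of_nonneg zero_le_two]) d
  have h2 : (2 : ℝ) ^ n ≤ exp (A * d) := by
    refine le_trans ?_ (exp_le_exp.mpr hn)
    rw [← mul_one (n : ℝ), exp_nat_mul]
    exact pow_le_pow_left₀ (by norm_num) (by linarith [add_one_le_exp (1 : ℝ)]) n
  have hsqrt : √(d : ℝ) ≤ d := sqrt_le_iff.mpr ⟨by positivity, by
    norm_cast; nlinarith [Nat.zero_le d]⟩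
  calc m * (2 ^ n * exp (-((A + 3) * d)))
      ≤ exp (2 * d) * (exp (A * d) * exp (-((A + 3) * d))) := by gcongr
    _ = exp (-d) := by rw [← exp_add, ← exp_add]; ring_nf
    _ ≤ exp (-√d) := exp_le_exp.mpr (by linarith)

lemma eventually_sq_mul_exp_neg_sqrt_le (A : ℝ) :
    ∀ᶠ d : ℕ in atTop, ∀ n : ℕ, (n : ℝ) ≤ A * d →
      (n : ℝ) ^ 2 * (2 * exp (-(4 * √d))) ≤ exp (-√d) := by
  have h := ((tendsto_pow_mul_exp_neg_atTop_nhds_zero 4).comp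
    (tendsto_sqrt_atTop.comp tendsto_natCast_atTop_atTop)).const_mul (2 * A ^ 2)
  rw [mul_zero] at h
  filter_upwards [h.eventually (ge_mem_nhds zero_lt_one)] with d hd n hn
  rw [Function.comp_apply, Function.comp_apply] at hd
  have hd4 : √(d : ℝ) ^ 4 = (d : ℝ) ^ 2 := by
    rw [show 4 = 2 * 2 by rfl, pow_mul, sq_sqrt (Nat.cast_nonneg d)]
  have hn2 : (n : ℝ) ^ 2 ≤ A ^ 2 * d ^ 2 := by
    rw [← mul_pow]; exact pow_le_pow_left₀ (Nat.cast_nonneg n) hn 2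
  calc (n : ℝ) ^ 2 * (2 * exp (-(4 * √d)))
      ≤ A ^ 2 * d ^ 2 * (2 * exp (-√d + -√d)) := by
        gcongr
        linarith [sqrt_nonneg (d : ℝ)]
    _ = 2 * A ^ 2 * (√d ^ 4 * exp (-√d)) * exp (-√d) := by rw [hd4, exp_add]; ring
    _ ≤ exp (-√d) := mul_le_of_le_one_left (exp_nonneg _) hd

/-- **Lemma A.4 (Bound on Hadamard powers of correlations with the data).**
Under the data assumption with `n ≤ C₀ d`: there are constants `c, C > 0` such that for all
sufficiently large `d`, with probability at least `1 − 2 exp(−c √d)` over the data,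
simultaneously for every `x̂` with `‖x̂‖₂ = √d` and every `l ≥ 2`:
`‖(X x̂)^{∘l} / d^l‖₂ ≤ C₁^{l−1} + C d^{−0.1}`, where `C₁ = maxᵢ |xᵢᵀx̂| / d`. -/
theorem hadamard_power_correlation_bound (K C₀ : ℝ) :
    ∃ c : ℝ, 0 < c ∧ ∃ C : ℝ, 0 < C ∧ ∃ D : ℕ, ∀ d : ℕ, D ≤ d →
      ∀ n : ℕ, (n : ℝ) ≤ C₀ * d →
        ∀ P : Measure (Fin d → ℝ), DataAssumption P K →
          1 - ENNReal.ofReal (2 * Real.exp (-c * Real.sqrt d)) ≤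
            (Measure.pi fun _ : Fin n => P)
              {x | ∀ xh : Fin d → ℝ, eNorm xh = Real.sqrt d → ∀ l : ℕ, 2 ≤ l →
                eNorm (fun i : Fin n => (dotp (x i) xh) ^ l / (d : ℝ) ^ l) ≤
                  (⨆ i : Fin n, |dotp (x i) xh| / (d : ℝ)) ^ (l - 1) +
                    C * (d : ℝ) ^ (-(0.1 : ℝ))} := by
  obtain ⟨t, hKt, ht⟩ : ∃ t, K < t ∧ 0 < t :=
    ⟨max K 0 + 1, by linarith [le_max_left K 0], by positivity⟩
  set A := max C₀ 0
  obtain ⟨D, hD⟩ := eventually_atTop.mp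
    ((eventually_ge_atTop 1).and (eventually_sq_mul_exp_neg_sqrt_le A))
  refine ⟨1, one_pos, 4 * (t ^ 2 * (A + 3)) * (2 * t + 1), by positivity, D,
    fun d hdD n hn P hP => ?_⟩
  have := hP.prob
  obtain ⟨hd, hdecay⟩ := hD d hdD
  obtain ⟨q, hq1, hq8, hsqrt, hq⟩ := exists_eighth_root (x := d) (by exact_mod_cast hd)
  have hnA : (n : ℝ) ≤ A * d := hn.trans (by gcongr; exact le_max_left _ _)
  obtain ⟨N, hNcov, hNsph, hNcard⟩ := exists_finset_isCover_sphere (E := EuclideanSpace ℝ (Fin d))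
  -- `θ = t² (A + 3) d` beats the factor `5^d 2^n` of the union bound over the net, and
  -- `r = 2 t d^{1/4}` makes each pair tail `2 e^{-4√d}`.
  have hρ : 2 * t * q ^ 2 * √d = 2 * t * q⁻¹ ^ 2 * d := by rw [hsqrt, ← hq8]; field_simp
  refine one_sub_le_measure_of_measure_compl_le ((measure_mono (Set.compl_subset_compl.mpr
    fun x hx xh hxh l hl => ?_)).trans ((hP.measure_pi_not_isGoodSample_le hd hKt hNsph
      (t ^ 2 * (A + 3) * d) (r := 2 * t * q ^ 2) (by positivity)).trans ?_))
  · rw [hρ] at hx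
    exact (hx.eNorm_pow_div_pow_le hd hNcov (by positivity) (by positivity) (by positivity)
      (inv_le_one_of_one_le₀ hq1) hxh hl).trans (by gcongr)
  · have hnet := mul_two_pow_mul_exp_le (by simpa using hNcard) hnA
    rw [show t ^ 2 * (A + 3) * d / t ^ 2 = (A + 3) * d by field_simp,
      show (2 * t * q ^ 2) ^ 2 / t ^ 2 = 4 * √d by rw [hsqrt]; field_simp; ring,
      ← ENNReal.ofReal_add (by positivity) (by positivity), neg_one_mul]
    exact ENNReal.ofReal_le_ofReal (by linarith [hdecay n hnA])
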